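/- arXiv:2006.03142 — 2 statements merged into one kernel-verified Lean document; each statement's English description precedes it below -/
import Mathlib

section
/- Let x be a decision node and i a buyer with f_i(x) > 1 and κ_i(x) < t − 1. Then p_i(x + e_{−i}) ≤ p_i(x), and the inequality is strict if and only if κ_i(x + e_i) = t − 1. -/
open Finset

noncomputable section

/-- The opponent of buyer `i`. -/
def other (i : Fin 2) : Fin 2 := 1 - i

/-- The standard unit vector of buyer `i`: winning one item moves `x` to `x + e i`. -/
def e (i : Fin 2) : Fin 2 → ℕ := Pi.single i 1

/-- Remaining supply `t(x) = T - x₁ - x₂` at node `x`. -/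
def supply (T : ℕ) (x : Fin 2 → ℕ) : ℕ := T - (x 0 + x 1)

/-- `x` is a decision node: `x₁ + x₂ < T`. -/
def IsDecision (T : ℕ) (x : Fin 2 → ℕ) : Prop := x 0 + x 1 < T

/-- Incremental value `v_i(k|x) = v_i(x_i + k)`. -/
def val (v : Fin 2 → ℕ → ℝ) (i : Fin 2) (k : ℕ) (x : Fin 2 → ℕ) : ℝ := v i (x i + k)

/-- Valuations are nonnegative and weakly decreasing. -/
def Admissible (v : Fin 2 → ℕ → ℝ) : Prop := ∀ i k, 0 ≤ v i k ∧ v i (k + 1) ≤ v i k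

/-- Greedy payoff `μ̄_i(k|x) = Σ_{j=1}^k v_i(j|x) - k · v_{-i}(t-k+1|x)`. -/
def gbar (T : ℕ) (v : Fin 2 → ℕ → ℝ) (i : Fin 2) (k : ℕ) (x : Fin 2 → ℕ) : ℝ :=
  (∑ j ∈ Finset.Icc 1 k, val v i j x) - (k : ℝ) * val v (other i) (supply T x - k + 1) x

/-- Greedy utility `μ_i(x) = max_{0 ≤ k ≤ t} μ̄_i(k|x)` (equal to `0` at terminal nodes). -/
def gu (T : ℕ) (v : Fin 2 → ℕ → ℝ) (i : Fin 2) (x : Fin 2 → ℕ) : ℝ :=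
  Finset.sup' (Finset.range (supply T x + 1)) ⟨0, Finset.mem_range.mpr (Nat.succ_pos _)⟩
    (fun k => gbar T v i k x)

/-- Greedy demand `κ_i(x)`: the least `k ∈ {0,…,t}` attaining the greedy utility. -/
def gd (T : ℕ) (v : Fin 2 → ℕ → ℝ) (i : Fin 2) (x : Fin 2 → ℕ) : ℕ :=
  sInf {k | k ≤ supply T x ∧ gbar T v i k x = gu T v i x}

/-- Duopsony factor `f_i(x) = max ({k ∈ {1,…,t} : v_i(k|x) > v_{-i}(t-k+1|x)} ∪ {0})`. -/
def df (T : ℕ) (v : Fin 2 → ℕ → ℝ) (i : Fin 2) (x : Fin 2 → ℕ) : ℕ :=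
  sSup {k | 1 ≤ k ∧ k ≤ supply T x ∧
    val v (other i) (supply T x - k + 1) x < val v i k x}

/-- Baseline price `β_i(x)`. -/
def base (T : ℕ) (v : Fin 2 → ℕ → ℝ) (i : Fin 2) (x : Fin 2 → ℕ) : ℝ :=
  if df T v i x = 0 then val v i 1 x
  else val v (other i) (supply T x - gd T v i x + 1) x

/-- Threshold price `p_i(x) = v_i(1|x) + μ_i(x+e_i) - μ_i(x+e_{-i})`. -/
def tp (T : ℕ) (v : Fin 2 → ℕ → ℝ) (i : Fin 2) (x : Fin 2 → ℕ) : ℝ :=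
  val v i 1 x + gu T v i (x + e i) - gu T v i (x + e (other i))

/-!
Losing an item to the opponent shifts buyer `i`'s greedy problem by one index:
`μ̄_i(k | x + e_{-i}) = μ̄_i(k | x)` for `k < t`. Hence every greedy utility in `p_i(x)` and
`p_i(x + e_{-i})` is a prefix maximum `max_{k ≤ n} μ̄_i(k | ·)` of `μ̄_i(· | x)` or of
`μ̄_i(· | x + e_i)`, with `n = t - 1` for `p_i(x)` and `n = t - 2` for `p_i(x + e_{-i})`.
As `κ_i(x) < t - 1`, the two prefix maxima of `μ̄_i(· | x)` coincide, while the prefix maximum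
of `μ̄_i(· | x + e_i)` drops strictly exactly when its first maximiser is the last index `t - 1`.
-/

section PrefixMax

variable {α : Type*} [LinearOrder α] (f : ℕ → α)

def prefixMax (n : ℕ) : α :=
  (range (n + 1)).sup' ⟨0, mem_range.mpr (Nat.succ_pos _)⟩ f

def firstArgmax (n : ℕ) : ℕ :=
  sInf {k | k ≤ n ∧ f k = prefixMax f n}

lemma le_prefixMax {k n : ℕ} (hk : k ≤ n) : f k ≤ prefixMax f n :=
  le_sup' f (mem_range.mpr (Nat.lt_succ_of_le hk))

lemma prefixMax_mono {m n : ℕ} (h : m ≤ n) : prefixMax f m ≤ prefixMax f n :=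
  sup'_le _ _ fun _ hk => le_prefixMax f ((Nat.lt_succ_iff.mp (mem_range.mp hk)).trans h)

lemma prefixMax_congr {g : ℕ → α} {n : ℕ} (h : ∀ k ≤ n, f k = g k) :
    prefixMax f n = prefixMax g n :=
  sup'_congr _ rfl fun k hk => h k (Nat.lt_succ_iff.mp (mem_range.mp hk))

lemma firstArgmax_spec (n : ℕ) :
    firstArgmax f n ≤ n ∧ f (firstArgmax f n) = prefixMax f n := by
  refine Nat.sInf_mem (s := {k | k ≤ n ∧ f k = prefixMax f n}) ?_
  obtain ⟨k, hk, hfk⟩ := exists_mem_eq_sup' ⟨0, mem_range.mpr (Nat.succ_pos n)⟩ f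
  exact ⟨k, Nat.lt_succ_iff.mp (mem_range.mp hk), hfk.symm⟩

lemma firstArgmax_le {k n : ℕ} (hk : k ≤ n) (h : f k = prefixMax f n) : firstArgmax f n ≤ k :=
  Nat.sInf_le ⟨hk, h⟩

lemma prefixMax_eq_of_firstArgmax_le {m n : ℕ} (hm : firstArgmax f n ≤ m) (hmn : m ≤ n) :
    prefixMax f m = prefixMax f n :=
  (prefixMax_mono f hmn).antisymm <|
    (firstArgmax_spec f n).2 ▸ le_prefixMax f hm

lemma prefixMax_lt_succ_iff (n : ℕ) :
    prefixMax f n < prefixMax f (n + 1) ↔ firstArgmax f (n + 1) = n + 1 := by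
  constructor
  · intro hlt
    by_contra hne
    have hle : firstArgmax f (n + 1) ≤ n := by
      have := (firstArgmax_spec f (n + 1)).1
      omega
    exact hlt.ne (prefixMax_eq_of_firstArgmax_le f hle n.le_succ)
  · intro hlast
    refine (prefixMax_mono f n.le_succ).lt_of_ne fun heq => ?_
    obtain ⟨hc, hfc⟩ := firstArgmax_spec f n
    have : firstArgmax f (n + 1) ≤ firstArgmax f n :=
      firstArgmax_le f (hc.trans n.le_succ) (hfc.trans heq)
    omega

end PrefixMax

section Shift

variable (T : ℕ) (v : Fin 2 → ℕ → ℝ) (i : Fin 2) (x : Fin 2 → ℕ)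

lemma other_ne : other i ≠ i := by
  fin_cases i <;> decide

lemma supply_add_e (j : Fin 2) : supply T (x + e j) = supply T x - 1 := by
  have hj : e j 0 + e j 1 = 1 := by fin_cases j <;> simp [e]
  simp only [supply, Pi.add_apply]
  omega

lemma val_add_e_other (k : ℕ) : _root_.val v i k (x + e (other i)) = _root_.val v i k x := by
  simp [_root_.val, e, Pi.single_eq_of_ne (other_ne i).symm]

lemma val_other_add_e_other (k : ℕ) :
    _root_.val v (other i) k (x + e (other i)) = _root_.val v (other i) (k + 1) x := by
  simp only [_root_.val, Pi.add_apply, e, Pi.single_eq_same]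
  ring_nf

lemma gbar_add_e_other {k : ℕ} (hk : k < supply T x) :
    gbar T v i k (x + e (other i)) = gbar T v i k x := by
  have hidx : supply T x - 1 - k + 1 + 1 = supply T x - k + 1 := by omega
  simp only [gbar, val_add_e_other, val_other_add_e_other, supply_add_e, hidx]

lemma gu_eq_prefixMax : gu T v i x = prefixMax (fun k => gbar T v i k x) (supply T x) := rfl

lemma gd_eq_firstArgmax : gd T v i x = firstArgmax (fun k => gbar T v i k x) (supply T x) := rfl

lemma gu_add_e_other (h : 0 < supply T x) :
    gu T v i (x + e (other i)) = prefixMax (fun k => gbar T v i k x) (supply T x - 1) := by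
  rw [gu_eq_prefixMax, supply_add_e]
  exact prefixMax_congr _ fun k hk => gbar_add_e_other T v i x (by omega)

end Shift

theorem stmt8_general (T : ℕ) (v : Fin 2 → ℕ → ℝ)
    (x : Fin 2 → ℕ) (i : Fin 2)
    (hk : gd T v i x < supply T x - 1) :
    tp T v i (x + e (other i)) ≤ tp T v i x ∧
    (tp T v i (x + e (other i)) < tp T v i x ↔
      gd T v i (x + e i) = supply T x - 1) := by
  obtain ⟨s, hs⟩ : ∃ s, supply T x = s + 2 := ⟨supply T x - 2, by omega⟩
  rw [gd_eq_firstArgmax, hs] at hk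
  set f := fun k => gbar T v i k x
  set g := fun k => gbar T v i k (x + e i)
  have hsi : supply T (x + e i) = s + 1 := by rw [supply_add_e, hs]; rfl
  have hsy : supply T (x + e (other i)) = s + 1 := by rw [supply_add_e, hs]; rfl
  have htp : tp T v i x = _root_.val v i 1 x + prefixMax g (s + 1) - prefixMax f (s + 1) := by
    rw [tp, gu_eq_prefixMax, hsi, gu_add_e_other T v i x (by omega), hs]; rfl
  have hshift : prefixMax (fun k => gbar T v i k (x + e (other i))) s = prefixMax f s :=
    prefixMax_congr _ fun k hks => gbar_add_e_other T v i x (by omega)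
  have htp' : tp T v i (x + e (other i)) =
      _root_.val v i 1 x + prefixMax g s - prefixMax f s := by
    rw [tp, val_add_e_other, add_right_comm, gu_add_e_other T v i (x + e i) (by omega), hsi,
      gu_add_e_other T v i (x + e (other i)) (by omega), hsy, Nat.add_sub_cancel, hshift]
  have hf : prefixMax f s = prefixMax f (s + 1) := by
    rw [prefixMax_eq_of_firstArgmax_le f (by omega) (by omega : s ≤ s + 2),
      prefixMax_eq_of_firstArgmax_le f (by omega) (by omega : s + 1 ≤ s + 2)]
  have hlast : supply T x - 1 = s + 1 := by omega
  rw [htp, htp', hf, gd_eq_firstArgmax, hsi, hlast, ← prefixMax_lt_succ_iff g s]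
  refine ⟨by linarith [prefixMax_mono g s.le_succ], ⟨fun h => by linarith, fun h => by linarith⟩⟩

/-- Evolution of the threshold price upon losing. -/
theorem stmt8 (T : ℕ) (v : Fin 2 → ℕ → ℝ) (hv : Admissible v)
    (x : Fin 2 → ℕ) (hx : IsDecision T x) (i : Fin 2)
    (hf : 1 < df T v i x) (hk : gd T v i x < supply T x - 1) :
    tp T v i (x + e (other i)) ≤ tp T v i x ∧
    (tp T v i (x + e (other i)) < tp T v i x ↔
      gd T v i (x + e i) = supply T x - 1) :=
  stmt8_general T v x i hk
end
end

section
/- Suppose buyer 1 is a strict monopsonist at a decision node x, i.e. f_1(x) = t. Then for every real number ℓ ∈ [0, t), (t − ℓ)·v̄_2(ℓ|x) ≥ ∫_{κ_1(x)}^{t−ℓ} v̄_1(τ|x) dτ. -/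
/-!
Write `s = t - ℓ`, `n = ⌊ℓ⌋` and `M = t - n`, so that `M - 1 < s ≤ M` and
`v̄₂(ℓ|x) = v₂(n+1|x)`. Since `κ₁(x)` maximises the greedy payoff, `μ̄₁(M|x) ≤ μ̄₁(κ₁|x)`, which
bounds the integral of `v̄₁` over `[κ₁, M]` by `M · v₂(n+1|x)`. Strict monopsony gives
`v₂(n+1|x) < v₁(M|x)`, and `v̄₁ ≥ v₁(M|x)` on `[s, M]`, so cutting `[s, M]` off removes at least
`(M - s) · v₂(n+1|x)`. If `s < κ₁` the integral is nonpositive.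
-/

open Finset

noncomputable section

/-- Real extension of buyer 1's incremental valuation at `x`: `v̄₁(τ|x) = v₁(⌈τ⌉|x)`. -/
def rv1 (v : Fin 2 → ℕ → ℝ) (x : Fin 2 → ℕ) (τ : ℝ) : ℝ := v 0 (x 0 + ⌈τ⌉₊)

/-- Real extension of buyer 2's incremental valuation at `x`: `v̄₂(τ|x) = v₂(⌊τ⌋+1|x)`. -/
def rv2 (v : Fin 2 → ℕ → ℝ) (x : Fin 2 → ℕ) (τ : ℝ) : ℝ := v 1 (x 1 + ⌊τ⌋₊ + 1)

open MeasureTheory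

lemma Admissible.nonneg {v : Fin 2 → ℕ → ℝ} (hv : Admissible v) (i : Fin 2) (k : ℕ) :
    0 ≤ v i k :=
  (hv i k).1

lemma Admissible.antitone {v : Fin 2 → ℕ → ℝ} (hv : Admissible v) (i : Fin 2) :
    Antitone (v i) :=
  antitone_nat_of_succ_le fun k => (hv i k).2

lemma Antitone.sub_mul_le_intervalIntegral {f : ℝ → ℝ} (hf : Antitone f) {a b : ℝ}
    (hab : a ≤ b) : (b - a) * f b ≤ ∫ τ in a..b, f τ := by
  calc (b - a) * f b = ∫ _ in a..b, f b := by rw [intervalIntegral.integral_const, smul_eq_mul]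
    _ ≤ ∫ τ in a..b, f τ :=
      intervalIntegral.integral_mono_on hab intervalIntegrable_const hf.intervalIntegrable
        fun _ hτ => hf hτ.2

section RealExtension

variable {v : Fin 2 → ℕ → ℝ} (x : Fin 2 → ℕ)

lemma rv1_antitone (hv : Admissible v) : Antitone (rv1 v x) :=
  fun _ _ hab => hv.antitone 0 (Nat.add_le_add_left (Nat.ceil_mono hab) _)

lemma rv1_nonneg (hv : Admissible v) (τ : ℝ) : 0 ≤ rv1 v x τ :=
  hv.nonneg 0 _

lemma rv1_intervalIntegrable (hv : Admissible v) (a b : ℝ) :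
    IntervalIntegrable (rv1 v x) volume a b :=
  (rv1_antitone x hv).intervalIntegrable

lemma rv1_natCast (n : ℕ) : rv1 v x n = _root_.val v 0 n x := by
  simp [rv1, _root_.val]

lemma rv2_eq_val_floor (l : ℝ) : rv2 v x l = _root_.val v 1 (⌊l⌋₊ + 1) x := by
  simp [rv2, _root_.val, add_assoc]

lemma integral_rv1_unit (n : ℕ) :
    ∫ τ in (n : ℝ)..((n + 1 : ℕ) : ℝ), rv1 v x τ = _root_.val v 0 (n + 1) x := by
  have hceil :
      ∀ τ ∈ Set.Ioc (n : ℝ) ((n + 1 : ℕ) : ℝ), rv1 v x τ = _root_.val v 0 (n + 1) x := by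
    rintro τ ⟨hlo, hhi⟩
    rw [rv1, _root_.val, (Nat.ceil_eq_iff n.succ_ne_zero).2 ⟨by simpa using hlo, hhi⟩]
  rw [intervalIntegral.integral_of_le (by simp), setIntegral_congr_fun measurableSet_Ioc hceil]
  simp

lemma integral_rv1_natCast (hv : Admissible v) {K M : ℕ} (hKM : K ≤ M) :
    ∫ τ in (K : ℝ)..(M : ℝ), rv1 v x τ = ∑ j ∈ Ioc K M, _root_.val v 0 j x := by
  induction M, hKM using Nat.le_induction with
  | base => simp
  | succ M hKM ih =>
    rw [← intervalIntegral.integral_add_adjacent_intervals (rv1_intervalIntegrable x hv _ _)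
      (rv1_intervalIntegrable x hv _ _), ih, integral_rv1_unit, sum_Ioc_succ_top hKM]

end RealExtension

section Greedy

variable {T : ℕ} {v : Fin 2 → ℕ → ℝ} {i : Fin 2} {x : Fin 2 → ℕ}

lemma gd_mem : gd T v i x ≤ supply T x ∧ gbar T v i (gd T v i x) x = gu T v i x := by
  obtain ⟨k, hk, hmax⟩ := exists_mem_eq_sup' nonempty_range_add_one fun k => gbar T v i k x
  exact Nat.sInf_mem (s := {k | k ≤ supply T x ∧ gbar T v i k x = gu T v i x})
    ⟨k, Nat.lt_succ_iff.1 (mem_range.1 hk), hmax.symm⟩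

lemma gbar_le_gbar_gd {k : ℕ} (hk : k ≤ supply T x) :
    gbar T v i k x ≤ gbar T v i (gd T v i x) x :=
  gd_mem.2 ▸ le_sup' (fun k => gbar T v i k x) (mem_range.2 (Nat.lt_succ_of_le hk))

lemma sum_Ioc_gd_le (hv : Admissible v) {M : ℕ} (hKM : gd T v i x ≤ M)
    (hM : M ≤ supply T x) :
    ∑ j ∈ Ioc (gd T v i x) M, _root_.val v i j x ≤
      M * _root_.val v (other i) (supply T x - M + 1) x := by
  have hgreedy := gbar_le_gbar_gd (v := v) (i := i) hM
  have hprice : 0 ≤ (gd T v i x : ℝ) * _root_.val v (other i) (supply T x - gd T v i x + 1) x :=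
    mul_nonneg (Nat.cast_nonneg _) (hv.nonneg _ _)
  have hsplit := sum_Ioc_consecutive (fun j => _root_.val v i j x) (Nat.zero_le _) hKM
  simp only [gbar, show ∀ k, Icc 1 k = Ioc 0 k from Icc_add_one_left_eq_Ioc 0] at hgreedy
  linarith

end Greedy

lemma val_other_lt_of_df_eq_supply {T : ℕ} {v : Fin 2 → ℕ → ℝ} (hv : Admissible v)
    {i : Fin 2} {x : Fin 2 → ℕ} (hmono : df T v i x = supply T x) {k : ℕ} (hk1 : 1 ≤ k)
    (hk : k ≤ supply T x) :
    _root_.val v (other i) (supply T x - k + 1) x < _root_.val v i k x := by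
  set S := {k | 1 ≤ k ∧ k ≤ supply T x ∧
    _root_.val v (other i) (supply T x - k + 1) x < _root_.val v i k x}
  have hS : S.Nonempty := by
    by_contra hempty
    have : df T v i x = sSup S := rfl
    rw [Set.not_nonempty_iff_eq_empty.1 hempty, csSup_empty, Nat.bot_eq_zero] at this
    omega
  obtain ⟨-, -, htop⟩ : supply T x ∈ S := hmono ▸ Nat.sSup_mem hS ⟨_, fun _ hk => hk.2.1⟩
  calc _root_.val v (other i) (supply T x - k + 1) x
        ≤ _root_.val v (other i) (supply T x - supply T x + 1) x := hv.antitone _ (by simp)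
    _ < _root_.val v i (supply T x) x := htop
    _ ≤ _root_.val v i k x := hv.antitone _ (by simpa using hk)

theorem stmt17_general (T : ℕ) (v : Fin 2 → ℕ → ℝ) (hv : Admissible v)
    (x : Fin 2 → ℕ)
    (hmono : df T v 0 x = supply T x)
    (l : ℝ) (hl0 : 0 ≤ l) (hl1 : l < (supply T x : ℝ)) :
    (∫ τ in ((gd T v 0 x : ℝ))..((supply T x : ℝ) - l), rv1 v x τ)
      ≤ ((supply T x : ℝ) - l) * rv2 v x l := by
  set t := supply T x
  set K := gd T v 0 x
  rw [rv2_eq_val_floor]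
  set n := ⌊l⌋₊
  have hnt : n < t := (Nat.floor_lt hl0).2 hl1
  set M := t - n
  have hMn : t - M + 1 = n + 1 := by omega
  have hw : _root_.val v (other 0) (t - M + 1) x < _root_.val v 0 M x :=
    val_other_lt_of_df_eq_supply hv hmono (by omega) (Nat.sub_le t n)
  rw [hMn, show other 0 = 1 from rfl] at hw
  rcases lt_or_ge ((t : ℝ) - l) K with hK | hK
  · have hint := intervalIntegral.integral_nonneg (μ := volume) hK.le fun τ _ =>
      rv1_nonneg x hv τ
    have hw0 : 0 ≤ _root_.val v 1 (n + 1) x := hv.nonneg 1 _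
    rw [intervalIntegral.integral_symm]
    nlinarith
  have hsM : (t : ℝ) - l ≤ M := by
    rw [Nat.cast_sub hnt.le]
    linarith [Nat.floor_le hl0]
  have hKM : K ≤ M := by exact_mod_cast hK.trans hsM
  have hhead := sum_Ioc_gd_le hv hKM (Nat.sub_le t n)
  rw [hMn, show other 0 = 1 from rfl] at hhead
  have htail := (rv1_antitone x hv).sub_mul_le_intervalIntegral hsM
  rw [rv1_natCast] at htail
  calc ∫ τ in (K : ℝ)..(t - l), rv1 v x τ
      = ∑ j ∈ Ioc K M, _root_.val v 0 j x - ∫ τ in (t - l)..(M : ℝ), rv1 v x τ := by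
        rw [← integral_rv1_natCast x hv hKM]
        exact eq_sub_of_add_eq (intervalIntegral.integral_add_adjacent_intervals
          (rv1_intervalIntegrable x hv _ _) (rv1_intervalIntegrable x hv _ _))
    _ ≤ M * _root_.val v 1 (n + 1) x - (M - (t - l)) * _root_.val v 1 (n + 1) x :=
        sub_le_sub hhead ((mul_le_mul_of_nonneg_left hw.le (by linarith)).trans htail)
    _ = (t - l) * _root_.val v 1 (n + 1) x := by ring

/-- Lower bound on buyer 2's extended incremental valuation when buyer 1 is a
strict monopsonist. -/
theorem stmt17 (T : ℕ) (v : Fin 2 → ℕ → ℝ) (hv : Admissible v)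
    (x : Fin 2 → ℕ) (hx : IsDecision T x)
    (hmono : df T v 0 x = supply T x)
    (l : ℝ) (hl0 : 0 ≤ l) (hl1 : l < (supply T x : ℝ)) :
    (∫ τ in ((gd T v 0 x : ℝ))..((supply T x : ℝ) - l), rv1 v x τ)
      ≤ ((supply T x : ℝ) - l) * rv2 v x l :=
  stmt17_general T v hv x hmono l hl0 hl1
end
end
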